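/- arXiv:0809.2125 — 4 statements merged into one kernel-verified Lean document; each statement's English description precedes it below -/
import Mathlib

section
/- Abstract Gronwall-type inequality: Let B be a Banach space with a partial order ≤ that is compatible with addition and multiplication by nonnegative scalars, and such that limits of norm-convergent sequences preserve the order. Let Q : B → B be order-preserving such that each iterate Q^k is Lipschitz with constant q_k, where ∑_{k=1}^{∞} q_k < ∞. Let ξ be the unique fixed point of Q in B, and let δ ∈ B satisfy δ ≤ Q δ. Then δ ≤ ξ. -/
open Filter Topology

/-- Abstract Gronwall-type inequality (Proposition 2.1). -/
theorem stmt_6 {B : Type*} [NormedAddCommGroup B] [NormedSpace ℝ B] [CompleteSpace B]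
    (le : B → B → Prop)
    (hrefl : ∀ u, le u u)
    (hantisymm : ∀ u v, le u v → le v u → u = v)
    (htrans : ∀ u v w, le u v → le v w → le u w)
    (hadd : ∀ u v z w, le u v → le z w → le (u + z) (v + w))
    (hsmul : ∀ u v, ∀ c : ℝ, 0 ≤ c → le u v → le (c • u) (c • v))
    (hlim : ∀ μ ν : ℕ → B, ∀ μL νL : B, Tendsto μ atTop (𝓝 μL) →
      Tendsto ν atTop (𝓝 νL) → (∀ k, le (μ k) (ν k)) → le μL νL)
    (Q : B → B)
    (hmono : ∀ u v, le u v → le (Q u) (Q v))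
    (q : ℕ → NNReal)
    (hLip : ∀ k : ℕ, 1 ≤ k → LipschitzWith (q k) (Q^[k]))
    (hsum : Summable fun k => (q k : ℝ))
    (ξ : B) (hfix : Q ξ = ξ) (huniq : ∀ η, Q η = η → η = ξ)
    (δ : B) (hδ : le δ (Q δ)) :
    le δ ξ := by
  -- Step 1: δ ≤ Q^[n] δ for all n
  have hiter : ∀ n : ℕ, le δ (Q^[n] δ) := by
    intro n
    induction n with
    | zero => exact hrefl δ
    | succ n ih =>
      rw [Function.iterate_succ_apply']
      exact htrans _ _ _ hδ (hmono _ _ ih)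
  -- Step 2: Q^[n] ξ = ξ
  have hfixiter : ∀ n : ℕ, Q^[n] ξ = ξ := fun n =>
    Function.iterate_fixed hfix n
  -- Step 3: Q^[n] δ → ξ
  have hq0 : Tendsto (fun n => (q n : ℝ)) atTop (𝓝 0) := hsum.tendsto_atTop_zero
  have hbound : ∀ᶠ n in atTop, ‖Q^[n] δ - ξ‖ ≤ (q n : ℝ) * ‖δ - ξ‖ := by
    filter_upwards [eventually_ge_atTop 1] with n hn
    have := (hLip n hn).dist_le_mul δ ξ
    rw [hfixiter n] at this
    simpa [dist_eq_norm] using this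
  have htend : Tendsto (fun n => Q^[n] δ) atTop (𝓝 ξ) := by
    rw [tendsto_iff_norm_sub_tendsto_zero]
    have h1 : Tendsto (fun n => (q n : ℝ) * ‖δ - ξ‖) atTop (𝓝 0) := by
      simpa using hq0.mul_const ‖δ - ξ‖
    refine squeeze_zero_norm' ?_ h1
    filter_upwards [hbound] with n hn
    simpa using hn
  exact hlim (fun _ => δ) (fun n => Q^[n] δ) δ ξ tendsto_const_nhds htend hiter
end

section
/- If x is the unique S-valued solution of the integral equation x(t) = x₀(t) + ∫₀ᵗ exp(α₁ s - α₂ t) f(t,s,x(s)) ds + ∫ₜ^∞ exp(-β s + γ t) g(t,s,x(s)) ds, then x is differentiable on [0,∞) and its derivative is bounded: sup_{t ≥ 0} |ẋ(t)| < ∞. -/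
/-!
On `[0, ∞)` the solution is `x₀ + e^{-α₂ t} ∫₀ᵗ e^{α₁ s} f(t, s, x s) ds
+ e^{γ t} ∫ₜ^∞ e^{-β s} g(t, s, x s) ds`, so only the two integrals with a moving endpoint need
to be differentiated. Splitting them at `t₀`, the part with fixed limits is differentiated under
the integral sign (the `t`-derivatives of `f` and `g` are bounded, so dominated convergence
applies), while the part between `t₀` and `t` contributes the diagonal value of the integrand by
continuity. Every resulting term is bounded uniformly in `t` because
`e^{-α₂ t} ∫₀ᵗ e^{α₁ s} ds ≤ 1 / |α₁|` and `e^{γ t} ∫ₜ^∞ e^{-β s} ds ≤ 1 / β`.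
-/

open Real MeasureTheory intervalIntegral

/-- The integral operator T of equation (2.5). -/
noncomputable def Toper {n : ℕ} (α₁ α₂ β γ : ℝ) (x₀ : ℝ → (Fin n → ℝ))
    (f g : ℝ → ℝ → (Fin n → ℝ) → (Fin n → ℝ)) (y : ℝ → (Fin n → ℝ)) (t : ℝ) :
    Fin n → ℝ :=
  x₀ t + (∫ s in (0:ℝ)..t, Real.exp (α₁ * s - α₂ * t) • f t s (y s)) +
    ∫ s in Set.Ioi t, Real.exp (-β * s + γ * t) • g t s (y s)

open Set Filter Topology Interval

section

variable {E : Type*} [NormedAddCommGroup E] [NormedSpace ℝ E]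

theorem aestronglyMeasurable_of_hasDerivWithinAt_Ici {α : Type*} [MeasurableSpace α]
    {μ : Measure α} {F : ℝ → α → E} {F' : α → E} {t₀ : ℝ}
    (hF : ∀ t, AEStronglyMeasurable (F t) μ)
    (hF' : ∀ᵐ a ∂μ, HasDerivWithinAt (F · a) (F' a) (Ici t₀) t₀) :
    AEStronglyMeasurable F' μ := by
  refine aestronglyMeasurable_of_tendsto_ae (𝓝[>] t₀) (f := fun t a => slope (F · a) t₀ t)
    (fun t => ?_) ?_
  · simp only [slope_def_module]
    exact ((hF t).sub (hF t₀)).const_smul _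
  · filter_upwards [hF'] with a ha
    exact (hasDerivWithinAt_iff_tendsto_slope' (lt_irrefl t₀)).1
      (hasDerivWithinAt_Ioi_iff_Ici.2 ha)

theorem hasDerivWithinAt_integral_diag [CompleteSpace E] {F : ℝ → ℝ → E} {S : Set ℝ} {t₀ : ℝ}
    (hS : S.OrdConnected) (ht₀ : t₀ ∈ S) (hF : ContinuousOn (Function.uncurry F) (S ×ˢ S)) :
    HasDerivWithinAt (fun t => ∫ s in t₀..t, F t s) (F t₀ t₀) S t₀ := by
  rw [hasDerivWithinAt_iff_isLittleO, Asymptotics.isLittleO_iff]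
  intro ε hε
  obtain ⟨δ, hδ, hclose⟩ := Metric.continuousWithinAt_iff.1
    (hF (t₀, t₀) ⟨ht₀, ht₀⟩) ε hε
  filter_upwards [self_mem_nhdsWithin, nhdsWithin_le_nhds (Metric.ball_mem_nhds t₀ hδ)]
    with t ht htδ
  have hsub : uIcc t₀ t ⊆ S := hS.uIcc_subset ht₀ ht
  have hint : IntervalIntegrable (F t) volume t₀ t :=
    (hF.comp (Continuous.prodMk_right t).continuousOn fun s hs => ⟨ht, hsub hs⟩).intervalIntegrable
  rw [integral_same, sub_zero, ← intervalIntegral.integral_const,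
    ← integral_sub hint intervalIntegrable_const, Real.norm_eq_abs]
  refine intervalIntegral.norm_integral_le_of_norm_le_const fun s hs => ?_
  have hs' : s ∈ uIcc t₀ t := uIoc_subset_uIcc hs
  rw [← dist_eq_norm]
  refine (hclose (x := (t, s)) ⟨ht, hsub hs'⟩ ?_).le
  rw [Metric.mem_ball] at htδ
  rw [Prod.dist_eq]
  refine max_lt htδ ?_
  rw [dist_comm]
  exact (Real.dist_left_le_of_mem_uIcc hs').trans_lt (by rwa [dist_comm])

theorem lipschitzWith_comp_max_of_norm_deriv_le {h h' : ℝ → E} {s L : ℝ}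
    (hh : ∀ τ, s ≤ τ → HasDerivAt h (h' τ) τ) (hL : ∀ τ, s ≤ τ → ‖h' τ‖ ≤ L) :
    LipschitzWith (Real.nnabs L) (fun t => h (max t s)) := by
  have hL0 : 0 ≤ L := (norm_nonneg _).trans (hL s le_rfl)
  refine LipschitzWith.of_dist_le_mul fun t t' => ?_
  rw [dist_eq_norm, Real.dist_eq, Real.coe_nnabs, abs_of_nonneg hL0]
  calc ‖h (max t s) - h (max t' s)‖ ≤ L * ‖max t s - max t' s‖ :=
        (convex_Ici s).norm_image_sub_le_of_norm_hasDerivWithin_le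
          (fun τ hτ => (hh τ hτ).hasDerivWithinAt) hL (le_max_right t' s) (le_max_right t s)
    _ ≤ L * |t - t'| := mul_le_mul_of_nonneg_left (abs_max_sub_max_le_abs t t' s) hL0

theorem hasDerivWithinAt_integral_upper_of_dominated [CompleteSpace E] {F F' : ℝ → ℝ → E}
    {B : ℝ → ℝ} {a t₀ : ℝ} (ht₀ : a ≤ t₀)
    (hF : ContinuousOn (Function.uncurry F) {p | a ≤ p.2 ∧ p.2 ≤ p.1})
    (hF' : ∀ t s, a ≤ s → s ≤ t → HasDerivAt (F · s) (F' t s) t)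
    (hF'_le : ∀ t s, a ≤ s → s ≤ t → ‖F' t s‖ ≤ B s) (hB : IntervalIntegrable B volume a t₀) :
    HasDerivWithinAt (fun t => ∫ s in a..t, F t s) (F t₀ t₀ + ∫ s in a..t₀, F' t₀ s)
      (Ici a) t₀ := by
  set G : ℝ → ℝ → E := fun t s => F (max t s) s with hG
  have hGc : ContinuousOn (Function.uncurry G) (univ ×ˢ Ici a) :=
    hF.comp ((continuous_fst.max continuous_snd).prodMk continuous_snd).continuousOn
      fun p hp => ⟨hp.2, le_max_right _ _⟩
  have hGt : ∀ t, ContinuousOn (G t) (Ici a) := fun t =>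
    hGc.comp (Continuous.prodMk_right t).continuousOn fun s hs => ⟨mem_univ t, hs⟩
  have hsub : Ι a t₀ ⊆ Ici a := by
    rw [uIoc_of_le ht₀]
    exact Ioc_subset_Icc_self.trans Icc_subset_Ici_self
  have hGint : ∀ t b c, a ≤ b → a ≤ c → IntervalIntegrable (G t) volume b c := fun t b c hb hc =>
    ((hGt t).mono (ordConnected_Ici.uIcc_subset hb hc)).intervalIntegrable
  have hmeas : ∀ t, AEStronglyMeasurable (G t) (volume.restrict (Ι a t₀)) := fun t =>
    ((hGt t).mono hsub).aestronglyMeasurable measurableSet_uIoc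
  have hdiff : ∀ᵐ s ∂volume, s ∈ Ι a t₀ → HasDerivAt (G · s) (F' t₀ s) t₀ := by
    filter_upwards [Measure.ae_ne volume t₀] with s hne hs
    rw [uIoc_of_le ht₀] at hs
    refine (hF' t₀ s hs.1.le hs.2).congr_of_eventuallyEq ?_
    filter_upwards [Ioi_mem_nhds (lt_of_le_of_ne hs.2 hne)] with t ht
    simp only [hG, max_eq_left (mem_Ioi.1 ht).le]
  have hlip : ∀ s, a ≤ s → LipschitzWith (Real.nnabs (B s)) (G · s) := fun s hs =>
    lipschitzWith_comp_max_of_norm_deriv_le (h := (F · s)) (fun τ hτ => hF' τ s hs hτ)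
      fun τ hτ => hF'_le τ s hs hτ
  have hfixed : HasDerivAt (fun t => ∫ s in a..t₀, G t s) (∫ s in a..t₀, F' t₀ s) t₀ :=
    (intervalIntegral.hasDerivAt_integral_of_dominated_loc_of_lip univ_mem
      (Eventually.of_forall hmeas) (hGint t₀ a t₀ le_rfl ht₀)
      (aestronglyMeasurable_of_hasDerivWithinAt_Ici hmeas
        ((ae_restrict_iff' measurableSet_uIoc).2
          (hdiff.mono fun s h hs => (h hs).hasDerivWithinAt)))
      (Eventually.of_forall fun s hs => ((hlip s (hsub hs)).lipschitzOnWith))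
      hB hdiff).2
  have hdiag : HasDerivWithinAt (fun t => ∫ s in t₀..t, G t s) (F t₀ t₀) (Ici a) t₀ := by
    simpa [hG] using hasDerivWithinAt_integral_diag ordConnected_Ici (mem_Ici.2 ht₀)
      (hGc.mono fun p hp => ⟨mem_univ _, hp.2⟩)
  refine add_comm (∫ s in a..t₀, F' t₀ s) _ ▸
    (hfixed.hasDerivWithinAt.add hdiag).congr_of_mem (fun t ht => ?_) (mem_Ici.2 ht₀)
  rw [Pi.add_apply, integral_add_adjacent_intervals (hGint t a t₀ le_rfl ht₀) (hGint t t₀ t ht₀ ht)]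
  refine integral_congr fun s hs => ?_
  rw [uIcc_of_le ht] at hs
  simp only [hG, max_eq_left hs.2]

theorem HasDerivWithinAt.hasDerivAt_max_add_min_smul {h : ℝ → E} {d : E} {a : ℝ}
    (hh : HasDerivWithinAt h d (Ici a) a) :
    HasDerivAt (fun t => h (max t a) + min (t - a) 0 • d) d a := by
  have hright : HasDerivWithinAt (fun t => h (max t a) + min (t - a) 0 • d) d (Ici a) a :=
    hh.congr (fun t ht => by simp [max_eq_left (mem_Ici.1 ht), sub_nonneg.2 (mem_Ici.1 ht)])
      (by simp)
  have hleft : HasDerivWithinAt (fun t => h (max t a) + min (t - a) 0 • d) d (Iic a) a := by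
    have hlin : HasDerivAt (fun t => h a + (t - a) • d) d a := by
      simpa using (((hasDerivAt_id a).sub_const a).smul_const d).const_add (h a)
    exact hlin.hasDerivWithinAt.congr
      (fun t ht => by simp [max_eq_right (mem_Iic.1 ht), sub_nonpos.2 (mem_Iic.1 ht)]) (by simp)
  simpa using hleft.union hright

theorem lipschitzWith_clamp_add_min_smul {h h' : ℝ → E} {a s L : ℝ} (has : a ≤ s)
    (hh : ∀ τ ∈ Icc a s, HasDerivAt h (h' τ) τ) (hL : ∀ τ ∈ Icc a s, ‖h' τ‖ ≤ L) :
    LipschitzWith (Real.nnabs (2 * L)) (fun t => h (min (max t a) s) + min (t - a) 0 • h' a) := by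
  have hL0 : 0 ≤ L := (norm_nonneg _).trans (hL a ⟨le_rfl, has⟩)
  have hmem : ∀ t, min (max t a) s ∈ Icc a s := fun t =>
    ⟨le_min (le_max_right _ _) has, min_le_right _ _⟩
  have hclamp : ∀ t t', |min (max t a) s - min (max t' a) s| ≤ |t - t'| := fun t t' =>
    (abs_min_sub_min_le_max _ _ _ _).trans (by simpa using abs_max_sub_max_le_abs t t' a)
  refine LipschitzWith.of_dist_le_mul fun t t' => ?_
  rw [dist_eq_norm, Real.dist_eq, Real.coe_nnabs, abs_of_nonneg (by positivity)]
  calc ‖h (min (max t a) s) + min (t - a) 0 • h' a - (h (min (max t' a) s) + min (t' - a) 0 • h' a)‖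
      = ‖(h (min (max t a) s) - h (min (max t' a) s))
          + (min (t - a) 0 - min (t' - a) 0) • h' a‖ := by
        rw [sub_smul]; abel_nf
    _ ≤ L * |t - t'| + |t - t'| * L := by
        refine (norm_add_le _ _).trans (add_le_add ?_ ?_)
        · refine ((convex_Icc a s).norm_image_sub_le_of_norm_hasDerivWithin_le
            (fun τ hτ => (hh τ hτ).hasDerivWithinAt) hL (hmem t') (hmem t)).trans ?_
          exact mul_le_mul_of_nonneg_left (hclamp t t') hL0
        · rw [norm_smul, Real.norm_eq_abs]
          refine mul_le_mul ?_ (hL a ⟨le_rfl, has⟩) (norm_nonneg _) (abs_nonneg _)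
          simpa using abs_min_sub_min_le_max (t - a) 0 (t' - a) 0
    _ = 2 * L * |t - t'| := by ring

theorem hasDerivAt_clamp_add_min_smul {h h' : ℝ → E} {a s t₀ : ℝ}
    (hh : ∀ τ ∈ Ico a s, HasDerivAt h (h' τ) τ) (ht₀ : t₀ ∈ Ico a s) :
    HasDerivAt (fun t => h (min (max t a) s) + min (t - a) 0 • h' a) (h' t₀) t₀ := by
  rcases ht₀.1.eq_or_lt with rfl | hat₀
  · refine (hh a ht₀).hasDerivWithinAt.hasDerivAt_max_add_min_smul.congr_of_eventuallyEq ?_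
    filter_upwards [Iio_mem_nhds ht₀.2] with t ht
    rw [min_eq_left (max_le (le_of_lt ht) (le_of_lt ht₀.2))]
  · refine (hh t₀ ht₀).congr_of_eventuallyEq ?_
    filter_upwards [Ioo_mem_nhds hat₀ ht₀.2] with t ht
    simp [max_eq_left ht.1.le, min_eq_left ht.2.le, sub_nonneg.2 ht.1.le]

theorem ContinuousOn.comp_clamp {X : Type*} [TopologicalSpace X] {F : ℝ → ℝ → X} {a : ℝ}
    (hF : ContinuousOn (Function.uncurry F) {p | a ≤ p.1 ∧ p.1 ≤ p.2}) :
    ContinuousOn (fun p : ℝ × ℝ => F (min (max p.1 a) p.2) p.2) (univ ×ˢ Ici a) :=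
  hF.comp (((continuous_fst.max continuous_const).min continuous_snd).prodMk
    continuous_snd).continuousOn fun _ hp => ⟨le_min (le_max_right _ _) hp.2, min_le_right _ _⟩

theorem integrableOn_Ioi_comp_clamp {X : Type*} [NormedAddCommGroup X] {F : ℝ → ℝ → X}
    {B₀ : ℝ → ℝ} {a b : ℝ} (t : ℝ) (hab : a ≤ b)
    (hF : ContinuousOn (Function.uncurry F) {p | a ≤ p.1 ∧ p.1 ≤ p.2})
    (hF_le : ∀ t s, a ≤ t → t ≤ s → ‖F t s‖ ≤ B₀ s) (hB₀ : IntegrableOn B₀ (Ioi a)) :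
    IntegrableOn (fun s => F (min (max t a) s) s) (Ioi b) := by
  have hsub : Ioi b ⊆ Ici a := (Ioi_subset_Ioi hab).trans Ioi_subset_Ici_self
  refine (hB₀.mono_set (Ioi_subset_Ioi hab)).mono' ?_
    ((ae_restrict_iff' measurableSet_Ioi).2 (Eventually.of_forall fun s hs =>
      hF_le _ s (le_min (le_max_right _ _) (hsub hs)) (min_le_right _ _)))
  exact (hF.comp_clamp.comp (Continuous.prodMk_right t).continuousOn
    fun s hs => ⟨mem_univ t, hsub hs⟩).aestronglyMeasurable measurableSet_Ioi

theorem aestronglyMeasurable_restrict_Ioi_of_hasDerivAt {F F' : ℝ → ℝ → E} {a b c : ℝ}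
    (hac : a ≤ c) (hcb : c ≤ b) (hF : ContinuousOn (Function.uncurry F) {p | a ≤ p.1 ∧ p.1 ≤ p.2})
    (hF' : ∀ t s, a ≤ t → t ≤ s → HasDerivAt (F · s) (F' t s) t) :
    AEStronglyMeasurable (F' c) (volume.restrict (Ioi b)) := by
  have hsub : Ioi b ⊆ Ici a := (Ioi_subset_Ioi (hac.trans hcb)).trans Ioi_subset_Ici_self
  refine aestronglyMeasurable_of_hasDerivWithinAt_Ici (t₀ := c)
    (F := fun t s => F (min (max t a) s) s)
    (fun t => (hF.comp_clamp.comp (Continuous.prodMk_right t).continuousOn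
      fun s hs => ⟨mem_univ t, hsub hs⟩).aestronglyMeasurable measurableSet_Ioi)
    ((ae_restrict_iff' measurableSet_Ioi).2 (Eventually.of_forall fun s hs => ?_))
  have hcs : c < s := hcb.trans_lt hs
  refine (hF' c s hac hcs.le).hasDerivWithinAt.congr_of_eventuallyEq ?_
    (by rw [max_eq_left hac, min_eq_left hcs.le])
  filter_upwards [self_mem_nhdsWithin, nhdsWithin_le_nhds (Iio_mem_nhds hcs)] with t ht hts
  rw [max_eq_left (hac.trans ht), min_eq_left (le_of_lt hts)]

theorem hasDerivWithinAt_integral_Ioi_of_dominated [CompleteSpace E] {F F' : ℝ → ℝ → E}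
    {B₀ B : ℝ → ℝ} {a t₀ : ℝ} (ht₀ : a ≤ t₀)
    (hF : ContinuousOn (Function.uncurry F) {p | a ≤ p.1 ∧ p.1 ≤ p.2})
    (hF_le : ∀ t s, a ≤ t → t ≤ s → ‖F t s‖ ≤ B₀ s) (hB₀ : IntegrableOn B₀ (Ioi a))
    (hF' : ∀ t s, a ≤ t → t ≤ s → HasDerivAt (F · s) (F' t s) t)
    (hF'_le : ∀ t s, a ≤ t → t ≤ s → ‖F' t s‖ ≤ B s) (hB : IntegrableOn B (Ioi a)) :
    HasDerivWithinAt (fun t => ∫ s in Ioi t, F t s) ((∫ s in Ioi t₀, F' t₀ s) - F t₀ t₀)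
      (Ici a) t₀ := by
  -- The linear continuation to the left of `a` makes `G · s` differentiable at `t₀ = a`
  -- from both sides, as differentiation under the integral sign requires.
  set G : ℝ → ℝ → E := fun t s => F (min (max t a) s) s + min (t - a) 0 • F' a s with hG
  have hGF : ∀ t s, a ≤ t → t ≤ s → G t s = F t s := fun t s ht hts => by
    simp [hG, max_eq_left ht, min_eq_left hts, sub_nonneg.2 ht]
  have hG_clamp : ∀ t, a ≤ t → G t = fun s => F (min (max t a) s) s := fun t ht => by
    ext s
    simp [hG, sub_nonneg.2 ht]
  have hGint : ∀ t b, a ≤ t → a ≤ b → IntegrableOn (G t) (Ioi b) := fun t b ht hb => by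
    rw [hG_clamp t ht]
    exact integrableOn_Ioi_comp_clamp t hb hF hF_le hB₀
  have hfixed : HasDerivAt (fun t => ∫ s in Ioi t₀, G t s) (∫ s in Ioi t₀, F' t₀ s) t₀ :=
    (hasDerivAt_integral_of_dominated_loc_of_lip (F := G) univ_mem
      (Eventually.of_forall fun t => (integrableOn_Ioi_comp_clamp t ht₀ hF hF_le hB₀
        ).aestronglyMeasurable.add
          ((aestronglyMeasurable_restrict_Ioi_of_hasDerivAt le_rfl ht₀ hF hF').const_smul _))
      (hGint t₀ t₀ ht₀ ht₀) (aestronglyMeasurable_restrict_Ioi_of_hasDerivAt ht₀ le_rfl hF hF')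
      ((ae_restrict_iff' measurableSet_Ioi).2 (Eventually.of_forall fun s hs =>
        (lipschitzWith_clamp_add_min_smul (h := (F · s)) (ht₀.trans (mem_Ioi.1 hs).le)
          (fun τ hτ => hF' τ s hτ.1 hτ.2) fun τ hτ => hF'_le τ s hτ.1 hτ.2).lipschitzOnWith))
      ((hB.mono_set (Ioi_subset_Ioi ht₀)).const_mul 2)
      ((ae_restrict_iff' measurableSet_Ioi).2 (Eventually.of_forall fun s hs =>
        hasDerivAt_clamp_add_min_smul (h := (F · s)) (fun τ hτ => hF' τ s hτ.1 hτ.2.le)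
          ⟨ht₀, hs⟩))).2
  have hdiag : HasDerivWithinAt (fun t => ∫ s in t₀..t, G t s) (F t₀ t₀) (Ici a) t₀ := by
    rw [← hGF t₀ t₀ ht₀ le_rfl]
    refine hasDerivWithinAt_integral_diag ordConnected_Ici (mem_Ici.2 ht₀)
      ((hF.comp_clamp.mono fun p hp => ⟨mem_univ _, hp.2⟩).congr fun p hp => ?_)
    simp only [Function.uncurry, hG_clamp p.1 hp.1]
  refine (hfixed.hasDerivWithinAt.sub hdiag).congr_of_mem (fun t ht => ?_) (mem_Ici.2 ht₀)
  rw [Pi.sub_apply, ← integral_Ioi_sub_Ioi' (hGint t t₀ ht ht₀) (hGint t t ht ht),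
    sub_sub_cancel]
  exact setIntegral_congr_fun measurableSet_Ioi fun s hs => (hGF t s ht (mem_Ioi.1 hs).le).symm

theorem exp_mul_integral_exp_mul_le {α₁ α₂ t : ℝ} (hα₁ : α₁ ≠ 0) (hα₂ : 0 ≤ α₂)
    (hα : α₁ ≤ α₂) (ht : 0 ≤ t) :
    exp (-α₂ * t) * ∫ s in (0 : ℝ)..t, exp (α₁ * s) ≤ 1 / |α₁| := by
  rw [integral_comp_mul_left (fun s => exp s) hα₁, integral_exp, mul_zero, exp_zero, smul_eq_mul]
  have h₂ : exp (-α₂ * t) ≤ 1 := exp_le_one_iff.2 (by nlinarith)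
  have h₁₂ : exp (-α₂ * t) * exp (α₁ * t) ≤ 1 := by
    rw [← exp_add]; exact exp_le_one_iff.2 (by nlinarith)
  rcases hα₁.lt_or_gt with hneg | hpos
  · have h₁ : exp (α₁ * t) ≤ 1 := exp_le_one_iff.2 (by nlinarith)
    rw [abs_of_neg hneg, show exp (-α₂ * t) * (α₁⁻¹ * (exp (α₁ * t) - 1))
      = exp (-α₂ * t) * (1 - exp (α₁ * t)) / -α₁ by field_simp; ring]
    gcongr
    nlinarith [exp_pos (α₁ * t), exp_pos (-α₂ * t)]
    nlinarith [exp_pos (α₁ * t), exp_pos (-α₂ * t)]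
  · rw [abs_of_pos hpos, show exp (-α₂ * t) * (α₁⁻¹ * (exp (α₁ * t) - 1))
      = (exp (-α₂ * t) * exp (α₁ * t) - exp (-α₂ * t)) / α₁ by field_simp]
    gcongr
    linarith [exp_pos (-α₂ * t)]

theorem exp_mul_integral_Ioi_exp_mul_le {β γ t : ℝ} (hβ : 0 < β) (hγ : γ ≤ β) (ht : 0 ≤ t) :
    exp (γ * t) * ∫ s in Ioi t, exp (-β * s) ≤ 1 / β := by
  rw [integral_exp_mul_Ioi (neg_lt_zero.2 hβ), neg_div_neg_eq, ← mul_div_assoc, ← exp_add]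
  gcongr
  exact exp_le_one_iff.2 (by nlinarith)

theorem exp_mul_norm_integral_exp_mul_smul_le {h : ℝ → E} {α₁ α₂ t C : ℝ} (hα₁ : α₁ ≠ 0)
    (hα₂ : 0 ≤ α₂) (hα : α₁ ≤ α₂) (ht : 0 ≤ t) (hh : ∀ s ∈ Icc 0 t, ‖h s‖ ≤ C) :
    exp (-α₂ * t) * ‖∫ s in (0 : ℝ)..t, exp (α₁ * s) • h s‖ ≤ C / |α₁| := by
  have hC : 0 ≤ C := (norm_nonneg _).trans (hh 0 ⟨le_rfl, ht⟩)
  have hI : ‖∫ s in (0 : ℝ)..t, exp (α₁ * s) • h s‖ ≤ C * ∫ s in (0 : ℝ)..t, exp (α₁ * s) := by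
    rw [← intervalIntegral.integral_const_mul]
    refine intervalIntegral.norm_integral_le_of_norm_le ht (Eventually.of_forall fun s hs => ?_)
      ((by fun_prop : Continuous fun s => C * exp (α₁ * s)).intervalIntegrable 0 t)
    rw [norm_smul, norm_of_nonneg (exp_pos _).le, mul_comm]
    exact mul_le_mul_of_nonneg_right (hh s (Ioc_subset_Icc_self hs)) (exp_pos _).le
  calc exp (-α₂ * t) * ‖∫ s in (0 : ℝ)..t, exp (α₁ * s) • h s‖
      ≤ C * (exp (-α₂ * t) * ∫ s in (0 : ℝ)..t, exp (α₁ * s)) := by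
        nlinarith [exp_pos (-α₂ * t)]
    _ ≤ C / |α₁| := by
        simpa [div_eq_mul_one_div C] using
          mul_le_mul_of_nonneg_left (exp_mul_integral_exp_mul_le hα₁ hα₂ hα ht) hC

theorem exp_mul_norm_integral_Ioi_exp_mul_smul_le {h : ℝ → E} {β γ t C : ℝ} (hβ : 0 < β)
    (hγ : γ ≤ β) (ht : 0 ≤ t) (hh : ∀ s ∈ Ioi t, ‖h s‖ ≤ C) :
    exp (γ * t) * ‖∫ s in Ioi t, exp (-β * s) • h s‖ ≤ C / β := by
  have hC : 0 ≤ C := (norm_nonneg _).trans (hh (t + 1) (lt_add_one t))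
  have hI : ‖∫ s in Ioi t, exp (-β * s) • h s‖ ≤ C * ∫ s in Ioi t, exp (-β * s) := by
    rw [← MeasureTheory.integral_const_mul]
    refine MeasureTheory.norm_integral_le_of_norm_le ((exp_neg_integrableOn_Ioi t hβ).const_mul C)
      ((ae_restrict_iff' measurableSet_Ioi).2 (Eventually.of_forall fun s hs => ?_))
    rw [norm_smul, norm_of_nonneg (exp_pos _).le, mul_comm]
    exact mul_le_mul_of_nonneg_right (hh s hs) (exp_pos _).le
  calc exp (γ * t) * ‖∫ s in Ioi t, exp (-β * s) • h s‖
      ≤ C * (exp (γ * t) * ∫ s in Ioi t, exp (-β * s)) := by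
        nlinarith [exp_pos (γ * t)]
    _ ≤ C / β := by
        simpa [div_eq_mul_one_div C] using
          mul_le_mul_of_nonneg_left (exp_mul_integral_Ioi_exp_mul_le hβ hγ ht) hC

theorem exists_hasDerivWithinAt_integral_exp_smul [CompleteSpace E] {u u' : ℝ → ℝ → E}
    {α₁ α₂ C D : ℝ} (hα₁ : α₁ ≠ 0) (hα₂ : 0 ≤ α₂) (hα : α₁ ≤ α₂)
    (hu : ContinuousOn (Function.uncurry u) {p | 0 ≤ p.2 ∧ p.2 ≤ p.1})
    (hu_le : ∀ t s, 0 ≤ s → s ≤ t → ‖u t s‖ ≤ C)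
    (hu' : ∀ t s, 0 ≤ s → s ≤ t → HasDerivAt (u · s) (u' t s) t)
    (hu'_le : ∀ t s, 0 ≤ s → s ≤ t → ‖u' t s‖ ≤ D) :
    ∃ d : ℝ → E, ∀ t, 0 ≤ t →
      HasDerivWithinAt (fun t => ∫ s in (0 : ℝ)..t, exp (α₁ * s - α₂ * t) • u t s) (d t)
        (Ici 0) t ∧ ‖d t‖ ≤ C + (D + α₂ * C) / |α₁| := by
  have hC : 0 ≤ C := (norm_nonneg _).trans (hu_le 0 0 le_rfl le_rfl)
  have hsplit : (fun t => ∫ s in (0 : ℝ)..t, exp (α₁ * s - α₂ * t) • u t s)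
      = fun t => exp (-α₂ * t) • ∫ s in (0 : ℝ)..t, exp (α₁ * s) • u t s := by
    ext t
    rw [← intervalIntegral.integral_smul]
    refine integral_congr fun s _ => ?_
    rw [smul_smul, ← exp_add, neg_mul, neg_add_eq_sub]
  refine ⟨fun t => exp (-α₂ * t) • (exp (α₁ * t) • u t t
      + ∫ s in (0 : ℝ)..t, exp (α₁ * s) • u' t s)
      + (exp (-α₂ * t) * -α₂) • ∫ s in (0 : ℝ)..t, exp (α₁ * s) • u t s,
    fun t ht => ⟨?_, ?_⟩⟩
  · have hint := hasDerivWithinAt_integral_upper_of_dominated (F := fun t s => exp (α₁ * s) • u t s)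
      (F' := fun t s => exp (α₁ * s) • u' t s) (B := fun s => exp (α₁ * s) * D) ht
      ((continuous_exp.comp (continuous_const.mul continuous_snd)).continuousOn.smul hu)
      (fun t s hs hst => (hu' t s hs hst).const_smul _)
      (fun t s hs hst => by
        rw [norm_smul, norm_of_nonneg (exp_pos _).le]
        exact mul_le_mul_of_nonneg_left (hu'_le t s hs hst) (exp_pos _).le)
      ((by fun_prop : Continuous fun s => exp (α₁ * s) * D).intervalIntegrable 0 t)
    have hexp : HasDerivAt (fun t => exp (-α₂ * t)) (exp (-α₂ * t) * -α₂) t := by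
      simpa using ((hasDerivAt_id t).const_mul (-α₂)).exp
    rw [hsplit]
    exact hexp.hasDerivWithinAt.smul hint
  · have hu'_int := exp_mul_norm_integral_exp_mul_smul_le hα₁ hα₂ hα ht
      (h := u' t) (C := D) fun s hs => hu'_le t s hs.1 hs.2
    have hu_int := exp_mul_norm_integral_exp_mul_smul_le hα₁ hα₂ hα ht
      (h := u t) (C := C) fun s hs => hu_le t s hs.1 hs.2
    have hexp_le : exp (-α₂ * t) * exp (α₁ * t) ≤ 1 := by
      rw [← exp_add]; exact exp_le_one_iff.2 (by nlinarith)
    have huu : exp (-α₂ * t) * exp (α₁ * t) * ‖u t t‖ ≤ C :=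
      (mul_le_of_le_one_left (norm_nonneg _) hexp_le).trans (hu_le t t ht le_rfl)
    calc _ ≤ exp (-α₂ * t) * exp (α₁ * t) * ‖u t t‖
          + exp (-α₂ * t) * ‖∫ s in (0 : ℝ)..t, exp (α₁ * s) • u' t s‖
          + α₂ * (exp (-α₂ * t) * ‖∫ s in (0 : ℝ)..t, exp (α₁ * s) • u t s‖) := by
          refine (norm_add_le _ _).trans (add_le_add ?_ (le_of_eq ?_))
          · rw [norm_smul, norm_of_nonneg (exp_pos _).le, mul_assoc, ← mul_add]
            refine mul_le_mul_of_nonneg_left ((norm_add_le _ _).trans_eq ?_) (exp_pos _).le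
            rw [norm_smul, norm_of_nonneg (exp_pos _).le]
          · rw [norm_smul, norm_mul, norm_neg, norm_of_nonneg (exp_pos _).le, norm_of_nonneg hα₂]
            ring
      _ ≤ C + D / |α₁| + α₂ * (C / |α₁|) := by gcongr
      _ = C + (D + α₂ * C) / |α₁| := by ring

theorem exists_hasDerivWithinAt_integral_Ioi_exp_smul [CompleteSpace E] {u u' : ℝ → ℝ → E}
    {β γ C D : ℝ} (hβ : 0 < β) (hγ : γ ≤ β)
    (hu : ContinuousOn (Function.uncurry u) {p | 0 ≤ p.1 ∧ p.1 ≤ p.2})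
    (hu_le : ∀ t s, 0 ≤ t → t ≤ s → ‖u t s‖ ≤ C)
    (hu' : ∀ t s, 0 ≤ t → t ≤ s → HasDerivAt (u · s) (u' t s) t)
    (hu'_le : ∀ t s, 0 ≤ t → t ≤ s → ‖u' t s‖ ≤ D) :
    ∃ d : ℝ → E, ∀ t, 0 ≤ t →
      HasDerivWithinAt (fun t => ∫ s in Ioi t, exp (-β * s + γ * t) • u t s) (d t) (Ici 0) t ∧
      ‖d t‖ ≤ C + (D + |γ| * C) / β := by
  have hsplit : (fun t => ∫ s in Ioi t, exp (-β * s + γ * t) • u t s)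
      = fun t => exp (γ * t) • ∫ s in Ioi t, exp (-β * s) • u t s := by
    ext t
    rw [← MeasureTheory.integral_smul]
    refine integral_congr_ae (Eventually.of_forall fun s => ?_)
    simp only [smul_smul, ← exp_add, add_comm]
  have hexp_smul_le : ∀ {v : ℝ → ℝ → E} {K : ℝ}, (∀ t s, 0 ≤ t → t ≤ s → ‖v t s‖ ≤ K) →
      ∀ t s, 0 ≤ t → t ≤ s → ‖exp (-β * s) • v t s‖ ≤ exp (-β * s) * K := fun hv t s ht hts => by
    rw [norm_smul, norm_of_nonneg (exp_pos _).le]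
    exact mul_le_mul_of_nonneg_left (hv t s ht hts) (exp_pos _).le
  refine ⟨fun t => exp (γ * t) • ((∫ s in Ioi t, exp (-β * s) • u' t s) - exp (-β * t) • u t t)
      + (exp (γ * t) * γ) • ∫ s in Ioi t, exp (-β * s) • u t s,
    fun t ht => ⟨?_, ?_⟩⟩
  · have hint := hasDerivWithinAt_integral_Ioi_of_dominated (F := fun t s => exp (-β * s) • u t s)
      (F' := fun t s => exp (-β * s) • u' t s) ht
      ((continuous_exp.comp (continuous_const.mul continuous_snd)).continuousOn.smul hu)
      (hexp_smul_le hu_le) ((exp_neg_integrableOn_Ioi 0 hβ).mul_const C)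
      (fun t s ht hts => (hu' t s ht hts).const_smul _)
      (hexp_smul_le hu'_le) ((exp_neg_integrableOn_Ioi 0 hβ).mul_const D)
    have hexp : HasDerivAt (fun t => exp (γ * t)) (exp (γ * t) * γ) t := by
      simpa using ((hasDerivAt_id t).const_mul γ).exp
    rw [hsplit]
    exact hexp.hasDerivWithinAt.smul hint
  · have hu'_int := exp_mul_norm_integral_Ioi_exp_mul_smul_le hβ hγ ht
      (h := u' t) (C := D) fun s hs => hu'_le t s ht (mem_Ioi.1 hs).le
    have hu_int := exp_mul_norm_integral_Ioi_exp_mul_smul_le hβ hγ ht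
      (h := u t) (C := C) fun s hs => hu_le t s ht (mem_Ioi.1 hs).le
    have hexp_le : exp (γ * t) * exp (-β * t) ≤ 1 := by
      rw [← exp_add]; exact exp_le_one_iff.2 (by nlinarith)
    have huu : exp (γ * t) * exp (-β * t) * ‖u t t‖ ≤ C :=
      (mul_le_of_le_one_left (norm_nonneg _) hexp_le).trans (hu_le t t ht le_rfl)
    calc _ ≤ exp (γ * t) * ‖∫ s in Ioi t, exp (-β * s) • u' t s‖
          + exp (γ * t) * exp (-β * t) * ‖u t t‖
          + |γ| * (exp (γ * t) * ‖∫ s in Ioi t, exp (-β * s) • u t s‖) := by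
          refine (norm_add_le _ _).trans (add_le_add ?_ (le_of_eq ?_))
          · rw [norm_smul, norm_of_nonneg (exp_pos _).le, mul_assoc, ← mul_add]
            refine mul_le_mul_of_nonneg_left ((norm_sub_le _ _).trans_eq ?_) (exp_pos _).le
            rw [norm_smul, norm_of_nonneg (exp_pos _).le]
          · rw [norm_smul, norm_mul, norm_of_nonneg (exp_pos _).le, Real.norm_eq_abs]
            ring
      _ ≤ D / β + C + |γ| * (C / β) := by gcongr
      _ = C + (D + |γ| * C) / β := by ring

end

theorem stmt_12_general {n : ℕ} (α₁ α₂ β γ : ℝ)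
    (hα₁ : α₁ ≠ 0) (hα₂ : 0 ≤ α₂) (hα : α₁ ≤ α₂) (hβ : 0 < β) (hγ : γ ≤ β)
    (x₀ : ℝ → (Fin n → ℝ)) (x₀' : ℝ → (Fin n → ℝ))
    (M₀' Cf Cg Df Dg : ℝ)
    (hx₀d : ∀ t : ℝ, 0 ≤ t → HasDerivAt x₀ (x₀' t) t)
    (hx₀d_bd : ∀ t : ℝ, 0 ≤ t → ‖x₀' t‖ ≤ M₀')
    (f g : ℝ → ℝ → (Fin n → ℝ) → (Fin n → ℝ))
    (ft gt : ℝ → ℝ → (Fin n → ℝ) → (Fin n → ℝ))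
    (R : ℝ)
    (hfc : ContinuousOn (fun p : ℝ × ℝ × (Fin n → ℝ) => f p.1 p.2.1 p.2.2)
      {p | 0 ≤ p.2.1 ∧ p.2.1 ≤ p.1 ∧ ‖p.2.2‖ ≤ R})
    (hgc : ContinuousOn (fun p : ℝ × ℝ × (Fin n → ℝ) => g p.1 p.2.1 p.2.2)
      {p | 0 ≤ p.1 ∧ p.1 ≤ p.2.1 ∧ ‖p.2.2‖ ≤ R})
    (hfb : ∀ t s : ℝ, ∀ x : Fin n → ℝ, 0 ≤ s → s ≤ t → ‖x‖ ≤ R → ‖f t s x‖ ≤ Cf)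
    (hgb : ∀ t s : ℝ, ∀ x : Fin n → ℝ, 0 ≤ t → t ≤ s → ‖x‖ ≤ R → ‖g t s x‖ ≤ Cg)
    (hft : ∀ t s : ℝ, ∀ x : Fin n → ℝ, 0 ≤ s → s ≤ t → ‖x‖ ≤ R →
      HasDerivAt (fun τ => f τ s x) (ft t s x) t ∧ ‖ft t s x‖ ≤ Df)
    (hgt : ∀ t s : ℝ, ∀ x : Fin n → ℝ, 0 ≤ t → t ≤ s → ‖x‖ ≤ R →
      HasDerivAt (fun τ => g τ s x) (gt t s x) t ∧ ‖gt t s x‖ ≤ Dg)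
    (x : ℝ → (Fin n → ℝ)) (hxc : Continuous x)
    (hxS : ∀ t : ℝ, 0 ≤ t → ‖x t‖ ≤ R)
    (hx : ∀ t : ℝ, 0 ≤ t → x t = Toper α₁ α₂ β γ x₀ f g x t) :
    ∃ x' : ℝ → (Fin n → ℝ),
      (∀ t : ℝ, 0 ≤ t → HasDerivWithinAt x (x' t) (Set.Ici 0) t) ∧
      ∃ C₀ : ℝ, ∀ t : ℝ, 0 ≤ t → ‖x' t‖ ≤ C₀ := by
  obtain ⟨dF, hdF⟩ := exists_hasDerivWithinAt_integral_exp_smul hα₁ hα₂ hα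
    (u := fun t s => f t s (x s)) (u' := fun t s => ft t s (x s))
    (hfc.comp (continuous_fst.prodMk (continuous_snd.prodMk (hxc.comp continuous_snd))).continuousOn
      fun p hp => ⟨hp.1, hp.2, hxS _ hp.1⟩)
    (fun t s hs hst => hfb t s (x s) hs hst (hxS s hs))
    (fun t s hs hst => (hft t s (x s) hs hst (hxS s hs)).1)
    (fun t s hs hst => (hft t s (x s) hs hst (hxS s hs)).2)
  obtain ⟨dG, hdG⟩ := exists_hasDerivWithinAt_integral_Ioi_exp_smul hβ hγ
    (u := fun t s => g t s (x s)) (u' := fun t s => gt t s (x s))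
    (hgc.comp (continuous_fst.prodMk (continuous_snd.prodMk (hxc.comp continuous_snd))).continuousOn
      fun p hp => ⟨hp.1, hp.2, hxS _ (hp.1.trans hp.2)⟩)
    (fun t s ht hts => hgb t s (x s) ht hts (hxS s (ht.trans hts)))
    (fun t s ht hts => (hgt t s (x s) ht hts (hxS s (ht.trans hts))).1)
    (fun t s ht hts => (hgt t s (x s) ht hts (hxS s (ht.trans hts))).2)
  refine ⟨fun t => x₀' t + dF t + dG t, fun t ht => ?_,
    M₀' + (Cf + (Df + α₂ * Cf) / |α₁|) + (Cg + (Dg + |γ| * Cg) / β), fun t ht => ?_⟩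
  · exact (((hx₀d t ht).hasDerivWithinAt.add (hdF t ht).1).add (hdG t ht).1).congr
      (fun s hs => hx s hs) (hx t ht)
  · exact norm_add₃_le.trans (add_le_add_three (hx₀d_bd t ht) (hdF t ht).2 (hdG t ht).2)

/-- Under (A1)-(A5) the S-valued solution of the integral equation (1.1) is
differentiable on `[0,∞)` with bounded derivative. -/
theorem stmt_12 {n : ℕ} (α₁ α₂ β γ : ℝ)
    (hα₁ : α₁ ≠ 0) (hα₂ : 0 ≤ α₂) (hα : α₁ ≤ α₂) (hβ : 0 < β) (hγ : γ ≤ β)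
    (x₀ : ℝ → (Fin n → ℝ)) (x₀' : ℝ → (Fin n → ℝ))
    (M₀ M₀' Cf Cg Lf Lg Df Ef Dg Eg : ℝ)
    (hM₀ : ∀ t : ℝ, 0 ≤ t → ‖x₀ t‖ ≤ M₀)
    (hx₀d : ∀ t : ℝ, 0 ≤ t → HasDerivAt x₀ (x₀' t) t)
    (hx₀d_bd : ∀ t : ℝ, 0 ≤ t → ‖x₀' t‖ ≤ M₀')
    (f g : ℝ → ℝ → (Fin n → ℝ) → (Fin n → ℝ))
    (ft fs gt gs : ℝ → ℝ → (Fin n → ℝ) → (Fin n → ℝ))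
    (R : ℝ) (hR : R = M₀ + Cf / |α₁| + Cg / β)
    (hfc : ContinuousOn (fun p : ℝ × ℝ × (Fin n → ℝ) => f p.1 p.2.1 p.2.2)
      {p | 0 ≤ p.2.1 ∧ p.2.1 ≤ p.1 ∧ ‖p.2.2‖ ≤ R})
    (hgc : ContinuousOn (fun p : ℝ × ℝ × (Fin n → ℝ) => g p.1 p.2.1 p.2.2)
      {p | 0 ≤ p.1 ∧ p.1 ≤ p.2.1 ∧ ‖p.2.2‖ ≤ R})
    (hfb : ∀ t s : ℝ, ∀ x : Fin n → ℝ, 0 ≤ s → s ≤ t → ‖x‖ ≤ R → ‖f t s x‖ ≤ Cf)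
    (hgb : ∀ t s : ℝ, ∀ x : Fin n → ℝ, 0 ≤ t → t ≤ s → ‖x‖ ≤ R → ‖g t s x‖ ≤ Cg)
    (hfL : ∀ t s : ℝ, ∀ x y : Fin n → ℝ, 0 ≤ s → s ≤ t → ‖x‖ ≤ R → ‖y‖ ≤ R →
      ‖f t s x - f t s y‖ ≤ Lf * ‖x - y‖)
    (hgL : ∀ t s : ℝ, ∀ x y : Fin n → ℝ, 0 ≤ t → t ≤ s → ‖x‖ ≤ R → ‖y‖ ≤ R →
      ‖g t s x - g t s y‖ ≤ Lg * ‖x - y‖)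
    (hq1 : Lf / |α₁| + Lg / β < 1)
    (hft : ∀ t s : ℝ, ∀ x : Fin n → ℝ, 0 ≤ s → s ≤ t → ‖x‖ ≤ R →
      HasDerivAt (fun τ => f τ s x) (ft t s x) t ∧ ‖ft t s x‖ ≤ Df)
    (hfs : ∀ t s : ℝ, ∀ x : Fin n → ℝ, 0 ≤ s → s ≤ t → ‖x‖ ≤ R →
      HasDerivAt (fun σ => f t σ x) (fs t s x) s ∧ ‖fs t s x‖ ≤ Ef)
    (hgt : ∀ t s : ℝ, ∀ x : Fin n → ℝ, 0 ≤ t → t ≤ s → ‖x‖ ≤ R →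
      HasDerivAt (fun τ => g τ s x) (gt t s x) t ∧ ‖gt t s x‖ ≤ Dg)
    (hgs : ∀ t s : ℝ, ∀ x : Fin n → ℝ, 0 ≤ t → t ≤ s → ‖x‖ ≤ R →
      HasDerivAt (fun σ => g t σ x) (gs t s x) s ∧ ‖gs t s x‖ ≤ Eg)
    (x : ℝ → (Fin n → ℝ)) (hxc : Continuous x)
    (hxS : ∀ t : ℝ, 0 ≤ t → ‖x t‖ ≤ R)
    (hx : ∀ t : ℝ, 0 ≤ t → x t = Toper α₁ α₂ β γ x₀ f g x t) :
    ∃ x' : ℝ → (Fin n → ℝ),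
      (∀ t : ℝ, 0 ≤ t → HasDerivWithinAt x (x' t) (Set.Ici 0) t) ∧
      ∃ C₀ : ℝ, ∀ t : ℝ, 0 ≤ t → ‖x' t‖ ≤ C₀ :=
  stmt_12_general α₁ α₂ β γ hα₁ hα₂ hα hβ hγ x₀ x₀' M₀' Cf Cg Df Dg hx₀d hx₀d_bd f g ft gt R hfc hgc
    hfb hgb hft hgt x hxc hxS hx
end

section
/- Convergence of error terms: with ω_{ij} := exp((α₁ j - α₂ i) h)(exp(α₁ h) - 1) for 0 ≤ j ≤ i-1 and ψ_{ij} := exp((-β j + γ i) h)(1 - exp(-β h)) for j ≥ i, the quantity ∑_{j=0}^{i-1} ∫_{jh}^{(j+1)h} exp(α₁ s - α₂ i h)(s - jh) ds + ∑_{j=i}^{∞} ∫_{jh}^{(j+1)h} exp(-β s + γ i h)(s - jh) ds is O(h) uniformly in i; i.e., there exist C > 0 and h₀ > 0 with this quantity ≤ C h for all 0 < h ≤ h₀ and all i ≥ 1. -/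
open Real MeasureTheory intervalIntegral

set_option maxHeartbeats 1600000 in
/-- Equation (2.17): the local consistency error terms are O(h) uniformly in i. -/
theorem stmt_14 (α₁ α₂ β γ : ℝ)
    (hα₁ : α₁ ≠ 0) (hα₂ : 0 ≤ α₂) (hα : α₁ ≤ α₂) (hβ : 0 < β) (hγ : γ ≤ β) :
    ∃ C > (0:ℝ), ∃ h₀ > (0:ℝ), ∀ h : ℝ, 0 < h → h ≤ h₀ → ∀ i : ℕ, 1 ≤ i →
      (∑ j ∈ Finset.range i,
          ∫ s in (j * h)..((j + 1 : ℕ) * h),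
            Real.exp (α₁ * s - α₂ * i * h) * (s - j * h)) +
        (∑' k : ℕ,
          ∫ s in ((i + k : ℕ) * h)..((i + k + 1 : ℕ) * h),
            Real.exp (-β * s + γ * i * h) * (s - (i + k : ℕ) * h)) ≤ C * h := by
  have hα₁' : (0:ℝ) < |α₁| := abs_pos.mpr hα₁
  refine ⟨1/|α₁| + 3/β, by positivity, 1/β, by positivity, ?_⟩
  intro h hh hhβ i hi
  have hih : (0:ℝ) ≤ (i:ℝ) * h := by positivity
  -- the common exponential in the first sum
  set f : ℝ → ℝ := fun s => Real.exp (α₁ * s - α₂ * i * h) with hf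
  have hcont : Continuous f := by fun_prop
  -- Step A: per-term bound for the first sum
  have hA : ∀ j : ℕ,
      (∫ s in ((j:ℝ) * h)..(((j:ℕ) + 1 : ℕ) * h), Real.exp (α₁ * s - α₂ * i * h) * (s - j * h))
        ≤ (∫ s in ((j:ℝ) * h)..(((j:ℕ) + 1 : ℕ) * h), f s) * h := by
    intro j
    have hle : ((j:ℝ) * h) ≤ (((j:ℕ) + 1 : ℕ) * h) := by
      push_cast; nlinarith
    have h1 : (∫ s in ((j:ℝ) * h)..(((j:ℕ) + 1 : ℕ) * h), Real.exp (α₁ * s - α₂ * i * h) * (s - j * h))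
        ≤ ∫ s in ((j:ℝ) * h)..(((j:ℕ) + 1 : ℕ) * h), f s * h := by
      apply intervalIntegral.integral_mono_on hle
      · exact (Continuous.intervalIntegrable (by fun_prop) _ _)
      · exact (Continuous.intervalIntegrable (by fun_prop) _ _)
      · intro x hx
        simp only [Set.mem_Icc] at hx
        have hx2 : x - (j:ℝ) * h ≤ h := by
          have := hx.2; push_cast at this ⊢; nlinarith
        have hx1 : (0:ℝ) ≤ x - (j:ℝ) * h := by linarith [hx.1]
        have := Real.exp_nonneg (α₁ * x - α₂ * i * h)
        simp only [hf]
        nlinarith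
    rwa [intervalIntegral.integral_mul_const] at h1
  -- Step B: telescoping sum of exponential integrals
  have hB : ∑ j ∈ Finset.range i, (∫ s in ((j:ℝ) * h)..(((j:ℕ) + 1 : ℕ) * h), f s)
      = ∫ s in (0:ℝ)..((i:ℝ) * h), f s := by
    have := intervalIntegral.sum_integral_adjacent_intervals
      (f := f) (μ := volume) (a := fun n : ℕ => (n:ℝ) * h) (n := i)
      (fun k _ => (hcont.intervalIntegrable _ _))
    simp only [Nat.cast_zero, zero_mul] at this
    exact this
  -- Step C: compute the integral
  have hC : (∫ s in (0:ℝ)..((i:ℝ) * h), f s)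
      = Real.exp (-(α₂ * i * h)) * ((Real.exp (α₁ * ((i:ℝ) * h)) - 1) / α₁) := by
    have : ∀ s, f s = Real.exp (α₁ * s) * Real.exp (-(α₂ * i * h)) := by
      intro s; rw [hf]; rw [← Real.exp_add]; ring_nf
    simp_rw [this]
    rw [intervalIntegral.integral_mul_const]
    rw [intervalIntegral.integral_comp_mul_left (fun x => Real.exp x) hα₁]
    simp [integral_exp, Real.exp_zero, smul_eq_mul]
    ring
  -- Step D: bound the value
  have hD : Real.exp (-(α₂ * i * h)) * ((Real.exp (α₁ * ((i:ℝ) * h)) - 1) / α₁) ≤ 1 / |α₁| := by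
    have e1 : Real.exp (-(α₂ * i * h)) ≤ 1 := Real.exp_le_one_iff.mpr (by nlinarith)
    have e1' : (0:ℝ) < Real.exp (-(α₂ * i * h)) := Real.exp_pos _
    rcases lt_or_gt_of_ne hα₁ with hneg | hpos
    · rw [abs_of_neg hneg, le_div_iff₀ (by linarith : (0:ℝ) < -α₁)]
      have e2 : Real.exp (α₁ * ((i:ℝ) * h)) ≤ 1 := Real.exp_le_one_iff.mpr (by nlinarith)
      have e2' : (0:ℝ) < Real.exp (α₁ * ((i:ℝ) * h)) := Real.exp_pos _
      have hq : (Real.exp (α₁ * ((i:ℝ) * h)) - 1) / α₁ * (-α₁)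
          = 1 - Real.exp (α₁ * ((i:ℝ) * h)) := by field_simp; ring
      rw [mul_assoc, hq]
      nlinarith
    · rw [abs_of_pos hpos]
      have e3 : Real.exp (-(α₂ * i * h)) * (Real.exp (α₁ * ((i:ℝ) * h)) - 1)
          ≤ 1 := by
        have : Real.exp (-(α₂ * i * h)) * Real.exp (α₁ * ((i:ℝ) * h))
            = Real.exp ((α₁ - α₂) * ((i:ℝ) * h)) := by
          rw [← Real.exp_add]; ring_nf
        have h4 : Real.exp ((α₁ - α₂) * ((i:ℝ) * h)) ≤ 1 :=
          Real.exp_le_one_iff.mpr (by nlinarith)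
        nlinarith
      rw [mul_div_assoc'] 
      rw [div_le_div_iff₀ hpos hpos]
      nlinarith
  -- First sum bound
  have hS1 : (∑ j ∈ Finset.range i,
      ∫ s in ((j:ℝ) * h)..(((j:ℕ) + 1 : ℕ) * h), Real.exp (α₁ * s - α₂ * i * h) * (s - j * h))
      ≤ (1/|α₁|) * h := by
    calc (∑ j ∈ Finset.range i,
        ∫ s in ((j:ℝ) * h)..(((j:ℕ) + 1 : ℕ) * h), Real.exp (α₁ * s - α₂ * i * h) * (s - j * h))
        ≤ ∑ j ∈ Finset.range i, (∫ s in ((j:ℝ) * h)..(((j:ℕ) + 1 : ℕ) * h), f s) * h :=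
          Finset.sum_le_sum (fun j _ => hA j)
      _ = (∑ j ∈ Finset.range i, (∫ s in ((j:ℝ) * h)..(((j:ℕ) + 1 : ℕ) * h), f s)) * h := by
          rw [Finset.sum_mul]
      _ ≤ (1/|α₁|) * h := by
          rw [hB, hC]
          exact mul_le_mul_of_nonneg_right hD (le_of_lt hh)
  -- Second sum bound
  set r : ℝ := Real.exp (-(β * h)) with hr
  have hr0 : (0:ℝ) ≤ r := le_of_lt (Real.exp_pos _)
  have hr1 : r < 1 := by
    rw [hr]; exact Real.exp_lt_one_iff.mpr (by nlinarith)
  set g : ℕ → ℝ := fun k =>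
    ∫ s in (((i:ℕ) + k : ℕ) * h)..(((i:ℕ) + k + 1 : ℕ) * h),
      Real.exp (-β * s + γ * i * h) * (s - ((i:ℕ) + k : ℕ) * h) with hg
  have hgG : ∀ k : ℕ, g k ≤ h^2 * r^k := by
    intro k
    simp only [hg]
    have hcast : (((i:ℕ) + k : ℕ) : ℝ) = (i:ℝ) + (k:ℝ) := by push_cast; ring
    have hcast1 : (((i:ℕ) + k + 1 : ℕ) : ℝ) = (i:ℝ) + (k:ℝ) + 1 := by push_cast; ring
    have hab : (((i:ℕ) + k : ℕ) : ℝ) * h ≤ (((i:ℕ) + k + 1 : ℕ) : ℝ) * h := by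
      rw [hcast, hcast1]; nlinarith
    have h1 : (∫ s in ((((i:ℕ) + k : ℕ) : ℝ) * h)..((((i:ℕ) + k + 1 : ℕ) : ℝ) * h),
          Real.exp (-β * s + γ * i * h) * (s - (((i:ℕ) + k : ℕ) : ℝ) * h))
        ≤ ∫ _ in ((((i:ℕ) + k : ℕ) : ℝ) * h)..((((i:ℕ) + k + 1 : ℕ) : ℝ) * h),
          Real.exp (-β * ((((i:ℕ) + k : ℕ) : ℝ) * h) + γ * i * h) * h := by
      apply intervalIntegral.integral_mono_on hab
      · exact (Continuous.intervalIntegrable (by fun_prop) _ _)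
      · exact (Continuous.intervalIntegrable (by fun_prop) _ _)
      · intro x hx
        simp only [Set.mem_Icc] at hx
        have hx1 : (0:ℝ) ≤ x - (((i:ℕ) + k : ℕ) : ℝ) * h := by linarith [hx.1]
        have hx2 : x - (((i:ℕ) + k : ℕ) : ℝ) * h ≤ h := by
          have := hx.2; rw [hcast1] at this; rw [hcast]; nlinarith
        have he : Real.exp (-β * x + γ * i * h)
            ≤ Real.exp (-β * ((((i:ℕ) + k : ℕ) : ℝ) * h) + γ * i * h) :=
          Real.exp_le_exp.mpr (by nlinarith [hx.1])
        have := Real.exp_nonneg (-β * x + γ * i * h)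
        have := Real.exp_nonneg (-β * ((((i:ℕ) + k : ℕ) : ℝ) * h) + γ * i * h)
        nlinarith
    have h2 : (∫ _ in ((((i:ℕ) + k : ℕ) : ℝ) * h)..((((i:ℕ) + k + 1 : ℕ) : ℝ) * h),
          Real.exp (-β * ((((i:ℕ) + k : ℕ) : ℝ) * h) + γ * i * h) * h)
        = h * (Real.exp (-β * ((((i:ℕ) + k : ℕ) : ℝ) * h) + γ * i * h) * h) := by
      rw [intervalIntegral.integral_const, smul_eq_mul]
      congr 1
      rw [hcast, hcast1]; ring
    have h3 : Real.exp (-β * ((((i:ℕ) + k : ℕ) : ℝ) * h) + γ * i * h) ≤ r^k := by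
      have heq : -β * ((((i:ℕ) + k : ℕ) : ℝ) * h) + γ * i * h
          = (γ - β) * ((i:ℝ) * h) + (k:ℝ) * (-(β * h)) := by
        rw [hcast]; ring
      rw [heq, Real.exp_add]
      have e1 : Real.exp ((γ - β) * ((i:ℝ) * h)) ≤ 1 :=
        Real.exp_le_one_iff.mpr (by nlinarith)
      have e2 : Real.exp ((k:ℝ) * (-(β * h))) = r^k := by
        rw [hr, ← Real.exp_nat_mul]
      rw [e2]
      nlinarith [pow_nonneg hr0 k]
    have hexps := Real.exp_nonneg (-β * ((((i:ℕ) + k : ℕ) : ℝ) * h) + γ * i * h)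
    calc (∫ s in ((((i:ℕ) + k : ℕ) : ℝ) * h)..((((i:ℕ) + k + 1 : ℕ) : ℝ) * h),
          Real.exp (-β * s + γ * i * h) * (s - (((i:ℕ) + k : ℕ) : ℝ) * h))
        ≤ h * (Real.exp (-β * ((((i:ℕ) + k : ℕ) : ℝ) * h) + γ * i * h) * h) := by
          rw [← h2]; exact h1
      _ ≤ h^2 * r^k := by nlinarith
  have hg0 : ∀ k : ℕ, 0 ≤ g k := by
    intro k
    simp only [hg]
    apply intervalIntegral.integral_nonneg (by push_cast; nlinarith)
    intro x hx
    simp only [Set.mem_Icc] at hx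
    have := Real.exp_nonneg (-β * x + γ * i * h)
    have : (0:ℝ) ≤ x - (((i:ℕ) + k : ℕ) : ℝ) * h := by linarith [hx.1]
    positivity
  have hGsum : Summable (fun k : ℕ => h^2 * r^k) :=
    (summable_geometric_of_lt_one hr0 hr1).mul_left _
  have hgsum : Summable g := Summable.of_nonneg_of_le hg0 hgG hGsum
  have hS2 : (∑' k : ℕ, g k) ≤ (3/β) * h := by
    have t1 : (∑' k : ℕ, g k) ≤ ∑' k : ℕ, h^2 * r^k := Summable.tsum_le_tsum hgG hgsum hGsum
    have t2 : (∑' k : ℕ, h^2 * r^k) = h^2 * (1 - r)⁻¹ := by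
      rw [tsum_mul_left, tsum_geometric_of_lt_one hr0 hr1]
    -- 1 - r ≥ β h / 3
    have hx1 : β * h ≤ 1 := by
      calc β * h ≤ β * (1/β) := by nlinarith
        _ = 1 := by field_simp
    have he1 : β * h + 1 ≤ Real.exp (β * h) := Real.add_one_le_exp _
    have he2 : Real.exp (β * h) ≤ 3 := by
      calc Real.exp (β * h) ≤ Real.exp 1 := Real.exp_le_exp.mpr hx1
        _ ≤ 3 := by linarith [Real.exp_one_lt_d9]
    have hEpos : (0:ℝ) < Real.exp (β * h) := Real.exp_pos _
    have hrE : r = (Real.exp (β * h))⁻¹ := by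
      rw [hr, ← Real.exp_neg]
    have h1r : β * h / 3 ≤ 1 - r := by
      rw [hrE]
      rw [div_le_iff₀ (by norm_num : (0:ℝ) < 3)]
      have : (Real.exp (β * h))⁻¹ * Real.exp (β * h) = 1 := inv_mul_cancel₀ (ne_of_gt hEpos)
      nlinarith [inv_nonneg.mpr (le_of_lt hEpos)]
    have h1rpos : (0:ℝ) < 1 - r := by nlinarith
    have : h^2 * (1 - r)⁻¹ ≤ (3/β) * h := by
      rw [mul_inv_le_iff₀ h1rpos]
      have : (3/β) * h * (1 - r) ≥ (3/β) * h * (β * h / 3) := by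
        apply mul_le_mul_of_nonneg_left h1r
        positivity
      calc h^2 = (3/β) * h * (β * h / 3) := by field_simp
        _ ≤ (3/β) * h * (1 - r) := this
    linarith
  calc _ ≤ (1/|α₁|) * h + (3/β) * h := add_le_add hS1 hS2
    _ = (1/|α₁| + 3/β) * h := by ring
end

section
/- Truncation convergence for β > γ: if x is the unique bounded solution of the infinite system x_i = b_i + ∑_{j=0}^{i-1} (1/α₁) ω_{ij} F_{ij}(x_j) + ∑_{j=i}^{∞} (1/β) ψ_{ij} G_{ij}(x_j), and x_N = (x_{N,i})_{0 ≤ i ≤ N} is the solution of the N-truncated system, then lim_{N→∞} max_{0 ≤ i ≤ N} |x_{N,i} - x_i| = 0. -/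
/-!
The error `e i = Y N i - x i`, `i ≤ N`, solves the difference of the two systems: Lipschitz
differences of `F` and `G` plus the neglected tail `∑_{j > N} ψ i j G i j (x j) / β`. The weights
satisfy `∑_{j < i} |ω i j| ≤ 1` and `∑_{j ≥ i} ψ i j ≤ 1`, so at an index where `‖e i‖` is maximal
`max ‖e‖ ≤ q max ‖e‖ + tail`, i.e. `max ‖e‖ ≤ tail / (1 - q)`. The tail is at most
`Cg exp ((γ i - β (N + 1)) h) / β ≤ Cg exp ((max γ 0 - β) h) ^ N / β`, which tends to `0` as `β > γ`.
-/

open Real Finset Filter Topology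

/-- The quadrature weights of section 3, equation (3.2). -/
noncomputable def omegaW (α₁ α₂ h : ℝ) (i j : ℕ) : ℝ :=
  Real.exp ((α₁ * j - α₂ * i) * h) * (Real.exp (α₁ * h) - 1)

noncomputable def psiW (β γ h : ℝ) (i j : ℕ) : ℝ :=
  Real.exp ((-β * j + γ * i) * h) * (1 - Real.exp (-β * h))

theorem nonneg_of_norm_sub_le_mul {V W : Type*} [NormedAddCommGroup V] [Nontrivial V]
    [SeminormedAddCommGroup W] {f : V → W} {L : ℝ}
    (hf : ∀ y z, ‖f y - f z‖ ≤ L * ‖y - z‖) : 0 ≤ L := by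
  obtain ⟨v, hv⟩ := exists_ne (0 : V)
  exact (mul_nonneg_iff_of_pos_right (norm_pos_iff.2 (sub_ne_zero.2 hv))).1
    ((norm_nonneg _).trans (hf v 0))

theorem tsum_nat_add_eq_sum_Icc_add_tsum {G : Type*} [AddCommGroup G] [TopologicalSpace G]
    [IsTopologicalAddGroup G] [T2Space G] {u : ℕ → G} (hu : Summable u) {i N : ℕ}
    (hi : i ≤ N + 1) :
    ∑' k, u (i + k) = ∑ j ∈ Icc i N, u j + ∑' k, u (N + 1 + k) := by
  have hshift : Summable fun k => u (i + k) := by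
    simpa only [add_comm] using (summable_nat_add_iff i).2 hu
  rw [← hshift.sum_add_tsum_nat_add (N + 1 - i),
    ← Ico_add_one_right_eq_Icc, sum_Ico_eq_sum_range]
  congr 2 with k
  congr 1
  omega

section NormBounds

variable {ι V : Type*} [SeminormedAddCommGroup V] [NormedSpace ℝ V] {w : ι → ℝ} {v : ι → V}
  {M : ℝ}

theorem norm_sum_smul_le (s : Finset ι) (hv : ∀ j ∈ s, ‖v j‖ ≤ M) :
    ‖∑ j ∈ s, w j • v j‖ ≤ (∑ j ∈ s, |w j|) * M := by
  rw [sum_mul]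
  refine norm_sum_le_of_le s fun j hj => ?_
  rw [norm_smul, Real.norm_eq_abs]
  exact mul_le_mul_of_nonneg_left (hv j hj) (abs_nonneg _)

theorem norm_tsum_smul_le (hw : Summable fun j => |w j|) (hv : ∀ j, ‖v j‖ ≤ M) :
    ‖∑' j, w j • v j‖ ≤ (∑' j, |w j|) * M :=
  tsum_of_norm_bounded (hw.hasSum.mul_right M) fun j => by
    rw [norm_smul, Real.norm_eq_abs]
    exact mul_le_mul_of_nonneg_left (hv j) (abs_nonneg _)

end NormBounds

section TruncatedSystem

variable {V : Type*} [NormedAddCommGroup V] [NormedSpace ℝ V]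
  {w p : ℕ → ℕ → ℝ} {b : ℕ → V} {F G : ℕ → ℕ → V → V} {x y : ℕ → V} {N : ℕ}

theorem truncated_sub_eq {i : ℕ} (hu : Summable fun j => p i j • G i j (x j)) (hi : i ≤ N)
    (hxi : x i = b i + ∑ j ∈ range i, w i j • F i j (x j) +
      ∑' k, p i (i + k) • G i (i + k) (x (i + k)))
    (hyi : y i = b i + ∑ j ∈ range i, w i j • F i j (y j) +
      ∑ j ∈ Icc i N, p i j • G i j (y j)) :
    y i - x i = ∑ j ∈ range i, w i j • (F i j (y j) - F i j (x j)) +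
      ∑ j ∈ Icc i N, p i j • (G i j (y j) - G i j (x j)) -
      ∑' k, p i (N + 1 + k) • G i (N + 1 + k) (x (N + 1 + k)) := by
  have hsplit := tsum_nat_add_eq_sum_Icc_add_tsum hu (show i ≤ N + 1 by omega)
  rw [hxi, hyi, hsplit]
  simp only [smul_sub, sum_sub_distrib]
  abel

variable [CompleteSpace V]

theorem norm_truncated_sub_le {a c Lf Lg Cg T : ℝ}
    (hw : ∀ i ≤ N, ∑ j ∈ range i, |w i j| ≤ a)
    (hp : ∀ i ≤ N, Summable fun j => |p i j|)
    (hpc : ∀ i ≤ N, ∑ j ∈ Icc i N, |p i j| ≤ c)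
    (hpT : ∀ i ≤ N, ∑' k, |p i (N + 1 + k)| ≤ T)
    (hG : ∀ i j z, ‖G i j z‖ ≤ Cg)
    (hFL : ∀ i j z z', ‖F i j z - F i j z'‖ ≤ Lf * ‖z - z'‖)
    (hGL : ∀ i j z z', ‖G i j z - G i j z'‖ ≤ Lg * ‖z - z'‖)
    (hLf : 0 ≤ Lf) (hLg : 0 ≤ Lg) (hq : Lf * a + Lg * c < 1)
    (hx : ∀ i ≤ N, x i = b i + ∑ j ∈ range i, w i j • F i j (x j) +
      ∑' k, p i (i + k) • G i (i + k) (x (i + k)))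
    (hy : ∀ i ≤ N, y i = b i + ∑ j ∈ range i, w i j • F i j (y j) +
      ∑ j ∈ Icc i N, p i j • G i j (y j)) :
    ∀ i ≤ N, ‖y i - x i‖ ≤ Cg * T / (1 - (Lf * a + Lg * c)) := by
  have hCg : 0 ≤ Cg := (norm_nonneg _).trans (hG 0 0 0)
  have step : ∀ E, (∀ j ≤ N, ‖y j - x j‖ ≤ E) →
      ∀ i ≤ N, ‖y i - x i‖ ≤ (Lf * a + Lg * c) * E + Cg * T := by
    intro E hE i hi
    have hE0 : 0 ≤ E := (norm_nonneg _).trans (hE i hi)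
    have hu : Summable fun j => p i j • G i j (x j) :=
      .of_norm_bounded ((hp i hi).mul_right Cg) fun j => by
        rw [norm_smul, Real.norm_eq_abs]
        exact mul_le_mul_of_nonneg_left (hG _ _ _) (abs_nonneg _)
    have hFpart : ‖∑ j ∈ range i, w i j • (F i j (y j) - F i j (x j))‖ ≤ a * (Lf * E) :=
      (norm_sum_smul_le _ fun j hj => (hFL _ _ _ _).trans <| mul_le_mul_of_nonneg_left
          (hE j (by have := mem_range.1 hj; omega)) hLf).trans
        (mul_le_mul_of_nonneg_right (hw i hi) (mul_nonneg hLf hE0))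
    have hGpart : ‖∑ j ∈ Icc i N, p i j • (G i j (y j) - G i j (x j))‖ ≤ c * (Lg * E) :=
      (norm_sum_smul_le _ fun j hj => (hGL _ _ _ _).trans <| mul_le_mul_of_nonneg_left
          (hE j (mem_Icc.1 hj).2) hLg).trans
        (mul_le_mul_of_nonneg_right (hpc i hi) (mul_nonneg hLg hE0))
    have htail : ‖∑' k, p i (N + 1 + k) • G i (N + 1 + k) (x (N + 1 + k))‖ ≤ T * Cg :=
      (norm_tsum_smul_le ((hp i hi).comp_injective (add_right_injective _))
        fun _ => hG _ _ _).trans (mul_le_mul_of_nonneg_right (hpT i hi) hCg)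
    rw [truncated_sub_eq hu hi (hx i hi) (hy i hi)]
    grw [norm_sub_le, norm_add_le]
    linarith
  obtain ⟨i₀, hi₀, hmax⟩ :=
    (range (N + 1)).exists_max_image (fun j => ‖y j - x j‖) nonempty_range_add_one
  have hE : ∀ j ≤ N, ‖y j - x j‖ ≤ ‖y i₀ - x i₀‖ :=
    fun j hj => hmax j (mem_range.2 (by omega))
  have hE₀ := step _ hE i₀ (by have := mem_range.1 hi₀; omega)
  intro i hi
  rw [le_div_iff₀ (by linarith)]
  nlinarith [hE i hi]

end TruncatedSystem

theorem exp_neg_mul_abs_exp_sub_one_le {u v : ℝ} (huv : u ≤ v) (hv : 0 ≤ v) :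
    exp (-v) * |exp u - 1| ≤ 1 := by
  rcases le_total 0 u with hu | hu
  · rw [abs_of_nonneg (sub_nonneg.2 (one_le_exp hu))]
    calc exp (-v) * (exp u - 1) ≤ exp (-v) * exp u := by gcongr; linarith
      _ = exp (u - v) := by rw [← exp_add]; ring_nf
      _ ≤ 1 := exp_le_one_iff.2 (by linarith)
  · rw [abs_sub_comm, abs_of_nonneg (sub_nonneg.2 (exp_le_one_iff.2 hu))]
    simpa using mul_le_mul (exp_le_one_iff.2 (by linarith)) (by linarith [exp_pos u])
      (sub_nonneg.2 (exp_le_one_iff.2 hu)) zero_le_one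

section Weights

variable {α₁ α₂ β γ h : ℝ}

/-- The weights `ω i j`, `j < i`, have the sign of `α₁` and telescope to
`exp (-α₂ i h) * (exp (α₁ i h) - 1)`. -/
theorem sum_abs_omegaW_le (hα₂ : 0 ≤ α₂) (hα : α₁ ≤ α₂) (hh : 0 ≤ h) (i : ℕ) :
    ∑ j ∈ range i, |omegaW α₁ α₂ h i j| ≤ 1 := by
  have habs : ∀ j : ℕ, |omegaW α₁ α₂ h i j| =
      exp (-(α₂ * i * h)) * (exp (α₁ * h) ^ j * |exp (α₁ * h) - 1|) := fun j => by
    rw [omegaW, abs_mul, abs_of_pos (exp_pos _), ← exp_nat_mul, ← mul_assoc, ← exp_add]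
    ring_nf
  calc ∑ j ∈ range i, |omegaW α₁ α₂ h i j|
      = exp (-(α₂ * i * h)) * |(∑ j ∈ range i, exp (α₁ * h) ^ j) * (exp (α₁ * h) - 1)| := by
        rw [sum_congr rfl fun j _ => habs j, ← mul_sum, ← sum_mul, abs_mul,
          abs_of_nonneg (sum_nonneg fun j _ => (pow_pos (exp_pos _) j).le)]
    _ = exp (-(α₂ * i * h)) * |exp (α₁ * i * h) - 1| := by
        rw [geom_sum_mul, ← exp_nat_mul]
        ring_nf
    _ ≤ 1 := exp_neg_mul_abs_exp_sub_one_le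
        (mul_le_mul_of_nonneg_right (mul_le_mul_of_nonneg_right hα (Nat.cast_nonneg i)) hh)
        (by positivity)

theorem psiW_eq (i j : ℕ) :
    psiW β γ h i j = exp (γ * i * h) * (1 - exp (-β * h)) * exp (-β * h) ^ j := by
  rw [psiW, ← exp_nat_mul, mul_right_comm, ← exp_add]
  ring_nf

theorem psiW_nonneg (hβh : 0 ≤ β * h) (i j : ℕ) : 0 ≤ psiW β γ h i j :=
  mul_nonneg (exp_pos _).le (sub_nonneg.2 (exp_le_one_iff.2 (by linarith [neg_mul β h])))

theorem hasSum_psiW (hβh : 0 < β * h) (i m : ℕ) :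
    HasSum (fun k => psiW β γ h i (m + k)) (exp ((γ * i - β * m) * h)) := by
  set r := exp (-β * h)
  have hr : r < 1 := exp_lt_one_iff.2 (by linarith [neg_mul β h])
  have hterm : (fun k => psiW β γ h i (m + k)) =
      fun k => exp (γ * i * h) * (1 - r) * r ^ m * r ^ k := by
    ext k
    rw [psiW_eq, pow_add]
    ring
  have hlim : exp ((γ * i - β * m) * h) = exp (γ * i * h) * (1 - r) * r ^ m * (1 - r)⁻¹ := by
    rw [mul_right_comm _ (1 - r), mul_assoc _ (1 - r), mul_inv_cancel₀ (sub_pos.2 hr).ne',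
      mul_one, ← exp_nat_mul, ← exp_add]
    ring_nf
  rw [hterm, hlim]
  exact (hasSum_geometric_of_lt_one (exp_pos _).le hr).mul_left _

theorem summable_psiW (hβh : 0 < β * h) (i : ℕ) : Summable (psiW β γ h i) := by
  have h0 := (hasSum_psiW (γ := γ) hβh i 0).summable
  simp only [zero_add] at h0
  exact h0

theorem sum_Icc_psiW_le (hβh : 0 < β * h) (hγ : γ ≤ β) (hh : 0 ≤ h) (i N : ℕ) :
    ∑ j ∈ Icc i N, psiW β γ h i j ≤ 1 := by
  rw [← Ico_add_one_right_eq_Icc, sum_Ico_eq_sum_range]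
  calc ∑ k ∈ range (N + 1 - i), psiW β γ h i (i + k) ≤ ∑' k, psiW β γ h i (i + k) :=
        ((summable_psiW hβh i).comp_injective (add_right_injective i)).sum_le_tsum _
          fun k _ => psiW_nonneg hβh.le i _
    _ = exp ((γ * i - β * i) * h) := (hasSum_psiW hβh i i).tsum_eq
    _ ≤ 1 := exp_le_one_iff.2 <| mul_nonpos_of_nonpos_of_nonneg
        (by nlinarith [(Nat.cast_nonneg i : (0 : ℝ) ≤ i)]) hh

/-- For `i ≤ N` the neglected tail is `exp ((γ i - β (N + 1)) h)`; bounding `γ i` by `max γ 0 * N`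
makes the bound uniform in `i`. -/
theorem tsum_psiW_tail_le (hβ : 0 < β) (hh : 0 < h) {i N : ℕ} (hi : i ≤ N) :
    ∑' k, psiW β γ h i (N + 1 + k) ≤ exp ((max γ 0 - β) * h) ^ N := by
  rw [(hasSum_psiW (mul_pos hβ hh) i (N + 1)).tsum_eq, ← exp_nat_mul, exp_le_exp]
  have hγi : γ * i ≤ max γ 0 * N := by
    calc γ * i ≤ max γ 0 * i := by gcongr; exact le_max_left _ _
      _ ≤ max γ 0 * N := by gcongr
  push_cast
  nlinarith

end Weights

theorem stmt_15_general {n : ℕ} (α₁ α₂ β γ h : ℝ)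
    (hα₂ : 0 ≤ α₂) (hα : α₁ ≤ α₂) (hβ : 0 < β) (hγ : γ < β)
    (hh : 0 < h)
    (b : ℕ → (Fin n → ℝ))
    (F G : ℕ → ℕ → (Fin n → ℝ) → (Fin n → ℝ))
    (Cg Lf Lg : ℝ)
    (hGb : ∀ i j : ℕ, ∀ x : Fin n → ℝ, ‖G i j x‖ ≤ Cg)
    (hFL : ∀ i j : ℕ, ∀ x y : Fin n → ℝ, ‖F i j x - F i j y‖ ≤ Lf * ‖x - y‖)
    (hGL : ∀ i j : ℕ, ∀ x y : Fin n → ℝ, ‖G i j x - G i j y‖ ≤ Lg * ‖x - y‖)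
    (hq : Lf / |α₁| + Lg / β < 1)
    -- x is the unique bounded solution of the infinite system (3.1)
    (x : ℕ → (Fin n → ℝ))
    (hx : ∀ i : ℕ, x i = b i +
      (∑ j ∈ Finset.range i, ((1 / α₁) * omegaW α₁ α₂ h i j) • F i j (x j)) +
      ∑' k : ℕ, ((1 / β) * psiW β γ h i (i + k)) • G i (i + k) (x (i + k)))
    -- Y N is the solution of the N-truncated system (3.4)
    (Y : ℕ → ℕ → (Fin n → ℝ))
    (hY : ∀ N : ℕ, ∀ i : ℕ, i ≤ N → Y N i = b i +
      (∑ j ∈ Finset.range i, ((1 / α₁) * omegaW α₁ α₂ h i j) • F i j (Y N j)) +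
      ∑ j ∈ Finset.Icc i N, ((1 / β) * psiW β γ h i j) • G i j (Y N j)) :
    ∀ ε > (0:ℝ), ∃ N₀ : ℕ, ∀ N ≥ N₀, ∀ i ≤ N, ‖Y N i - x i‖ < ε := by
  intro ε hε
  rcases subsingleton_or_nontrivial (Fin n → ℝ) with hV | hV
  · exact ⟨0, fun N _ i _ => by rwa [Subsingleton.elim (Y N i) (x i), sub_self, norm_zero]⟩
  set s := exp ((max γ 0 - β) * h)
  have hs : s < 1 := exp_lt_one_iff.2 (mul_neg_of_neg_of_pos (sub_neg.2 (max_lt hγ hβ)) hh)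
  have hβh : 0 < β * h := mul_pos hβ hh
  have hψ : ∀ i j, |1 / β * psiW β γ h i j| = 1 / β * psiW β γ h i j := fun i j =>
    abs_of_nonneg (mul_nonneg (by positivity) (psiW_nonneg hβh.le i j))
  have hbound : ∀ N, ∀ i ≤ N,
      ‖Y N i - x i‖ ≤ Cg * (1 / β * s ^ N) / (1 - (Lf * (1 / |α₁|) + Lg * (1 / β))) :=
    fun N => norm_truncated_sub_le (w := fun i j => 1 / α₁ * omegaW α₁ α₂ h i j)
      (p := fun i j => 1 / β * psiW β γ h i j)
      (fun i _ => by
        simpa [abs_mul, ← mul_sum] using mul_le_mul_of_nonneg_left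
          (sum_abs_omegaW_le hα₂ hα hh.le i) (abs_nonneg (1 / α₁)))
      (fun i _ => by simpa only [hψ] using (summable_psiW hβh i).mul_left (1 / β))
      (fun i _ => by
        simpa only [hψ, ← mul_sum, mul_one] using mul_le_mul_of_nonneg_left
          (sum_Icc_psiW_le hβh hγ.le hh.le i N) (one_div_nonneg.2 hβ.le))
      (fun i hi => by
        simpa only [hψ, tsum_mul_left] using mul_le_mul_of_nonneg_left
          (tsum_psiW_tail_le hβ hh hi) (one_div_nonneg.2 hβ.le))
      hGb hFL hGL (nonneg_of_norm_sub_le_mul (hFL 0 0)) (nonneg_of_norm_sub_le_mul (hGL 0 0))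
      (by simpa only [mul_one_div] using hq) (fun i _ => hx i) (hY N)
  have hlim : Tendsto (fun N => Cg * (1 / β * s ^ N) / (1 - (Lf * (1 / |α₁|) + Lg * (1 / β))))
      atTop (𝓝 0) := by
    simpa using (((tendsto_pow_atTop_nhds_zero_of_lt_one (exp_pos _).le hs).const_mul
      (1 / β)).const_mul Cg).div_const _
  obtain ⟨N₀, hN₀⟩ := eventually_atTop.1 (hlim.eventually_lt_const hε)
  exact ⟨N₀, fun N hN i hi => (hbound N i hi).trans_lt (hN₀ N hN)⟩

/-- Theorem 3.1: for β > γ the solutions of the truncated systems converge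
uniformly to the solution of the infinite system (3.1). -/
theorem stmt_15 {n : ℕ} (α₁ α₂ β γ h : ℝ)
    (hα₁ : α₁ ≠ 0) (hα₂ : 0 ≤ α₂) (hα : α₁ ≤ α₂) (hβ : 0 < β) (hγ : γ < β)
    (hh : 0 < h)
    (b : ℕ → (Fin n → ℝ)) (hb : ∃ M : ℝ, ∀ i, ‖b i‖ ≤ M)
    (F G : ℕ → ℕ → (Fin n → ℝ) → (Fin n → ℝ))
    (Cf Cg Lf Lg : ℝ)
    (hFb : ∀ i j : ℕ, ∀ x : Fin n → ℝ, ‖F i j x‖ ≤ Cf)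
    (hGb : ∀ i j : ℕ, ∀ x : Fin n → ℝ, ‖G i j x‖ ≤ Cg)
    (hFL : ∀ i j : ℕ, ∀ x y : Fin n → ℝ, ‖F i j x - F i j y‖ ≤ Lf * ‖x - y‖)
    (hGL : ∀ i j : ℕ, ∀ x y : Fin n → ℝ, ‖G i j x - G i j y‖ ≤ Lg * ‖x - y‖)
    (hq : Lf / |α₁| + Lg / β < 1)
    -- x is the unique bounded solution of the infinite system (3.1)
    (x : ℕ → (Fin n → ℝ)) (hxbd : ∃ M : ℝ, ∀ i, ‖x i‖ ≤ M)
    (hx : ∀ i : ℕ, x i = b i +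
      (∑ j ∈ Finset.range i, ((1 / α₁) * omegaW α₁ α₂ h i j) • F i j (x j)) +
      ∑' k : ℕ, ((1 / β) * psiW β γ h i (i + k)) • G i (i + k) (x (i + k)))
    -- Y N is the solution of the N-truncated system (3.4)
    (Y : ℕ → ℕ → (Fin n → ℝ))
    (hY : ∀ N : ℕ, ∀ i : ℕ, i ≤ N → Y N i = b i +
      (∑ j ∈ Finset.range i, ((1 / α₁) * omegaW α₁ α₂ h i j) • F i j (Y N j)) +
      ∑ j ∈ Finset.Icc i N, ((1 / β) * psiW β γ h i j) • G i j (Y N j)) :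
    ∀ ε > (0:ℝ), ∃ N₀ : ℕ, ∀ N ≥ N₀, ∀ i ≤ N, ‖Y N i - x i‖ < ε :=
  stmt_15_general α₁ α₂ β γ h hα₂ hα hβ hγ hh b F G Cg Lf Lg hGb hFL hGL hq x hx Y hY
end
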